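/- Let f : ℝ² → ℝ be any polynomial function. Then the infimum over all (x,y) ∈ ℝ² of the quantity Δ² = [((1+f_y²)·f_xx − 2·f_x·f_y·f_xy + (1+f_x²)·f_yy)² − 4·(1+f_x²+f_y²)·(f_xx·f_yy − f_xy²)] / (1+f_x²+f_y²)³, which equals the square (κ₁ − κ₂)² of the difference of the principal curvatures of the graph z = f(x,y), is equal to 0. In other words, Toponogov's condition inf |κ₁ − κ₂| = 0 holds for every polynomial graph. -/

import Mathlib

open MvPolynomial Real Filter

/-- Evaluate a bivariate polynomial at `(x, y)`. -/
noncomputable def ev (p : MvPolynomial (Fin 2) ℝ) (x y : ℝ) : ℝ :=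
  eval ![x, y] p

/-- Formal partial derivative in the first variable. -/
noncomputable def Dx (p : MvPolynomial (Fin 2) ℝ) : MvPolynomial (Fin 2) ℝ :=
  pderiv (0 : Fin 2) p

/-- Formal partial derivative in the second variable. -/
noncomputable def Dy (p : MvPolynomial (Fin 2) ℝ) : MvPolynomial (Fin 2) ℝ :=
  pderiv (1 : Fin 2) p

/-- The square `(κ₁ − κ₂)²` of the difference of the principal curvatures of the
graph `z = f(x,y)` at `(x,y)`, for `f` the polynomial function determined by `p`. -/
noncomputable def Delta2 (p : MvPolynomial (Fin 2) ℝ) (x y : ℝ) : ℝ :=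
  (((1 + ev (Dy p) x y ^ 2) * ev (Dx (Dx p)) x y
      - 2 * ev (Dx p) x y * ev (Dy p) x y * ev (Dy (Dx p)) x y
      + (1 + ev (Dx p) x y ^ 2) * ev (Dy (Dy p)) x y) ^ 2
    - 4 * (1 + ev (Dx p) x y ^ 2 + ev (Dy p) x y ^ 2)
        * (ev (Dx (Dx p)) x y * ev (Dy (Dy p)) x y - ev (Dy (Dx p)) x y ^ 2))
  / (1 + ev (Dx p) x y ^ 2 + ev (Dy p) x y ^ 2) ^ 3

/-- `W = √(1 + f_x² + f_y²)`. -/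
noncomputable def Wgr (p : MvPolynomial (Fin 2) ℝ) (x y : ℝ) : ℝ :=
  Real.sqrt (1 + ev (Dx p) x y ^ 2 + ev (Dy p) x y ^ 2)

/-- The distance to infinity `d = 1 − √((W−1)/(W+1)) = 1 − |ξ|` of the point `(x,y)`
under the Gauss map of the graph `z = f(x,y)`. -/
noncomputable def dInf (p : MvPolynomial (Fin 2) ℝ) (x y : ℝ) : ℝ :=
  1 - Real.sqrt ((Wgr p x y - 1) / (Wgr p x y + 1))

/-!
`Δ² = D / W⁶` with `W² = 1 + f_x² + f_y²` and `D` the discriminant `(tr)² - 4 det` of the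
Hessian relative to the first fundamental form; `(1 + f_x²)² D` is a sum of squares, so
`Δ² ≥ 0`. If `deg f ≤ 1` the Hessian vanishes and `Δ² ≡ 0`. Otherwise let
`d = deg f ≥ 2`. Some partial derivative of `f` has a nonzero homogeneous part of degree
`d - 1`, so along a suitable ray `t ↦ t • w` the gradient has degree exactly `d - 1` in `t` and
the Hessian degree at most `d - 2`. Then `D` has degree at most `6d - 8` and `W⁶` degree exactly
`6d - 6`, so `Δ² → 0` along the ray.
-/

open Topology

section PartialDerivative

variable {σ R : Type*} [CommRing R]

theorem totalDegree_pderiv_le (i : σ) (q : MvPolynomial σ R) :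
    (pderiv i q).totalDegree ≤ q.totalDegree - 1 :=
  Finset.sup_le fun m hm => by
    have hq : m + Finsupp.single i 1 ∈ q.support := by
      rw [MvPolynomial.mem_support_iff, coeff_pderiv] at hm
      exact mem_support_iff.mpr (left_ne_zero_of_mul hm)
    have := le_totalDegree hq
    change (m + Finsupp.single i 1).degree ≤ _ at this
    change m.degree ≤ _
    rw [map_add, Finsupp.degree_single] at this
    omega

theorem pderiv_pderiv_eq_zero {q : MvPolynomial σ R} (hq : q.totalDegree ≤ 1) (i j : σ) :
    pderiv j (pderiv i q) = 0 := by
  have := totalDegree_pderiv_le i q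
  rw [(totalDegree_eq_zero_iff_eq_C (p := pderiv i q)).mp (by omega), pderiv_C]

theorem exists_homogeneousComponent_pderiv_ne_zero [NoZeroDivisors R] [CharZero R]
    {q : MvPolynomial σ R} (hq : 0 < q.totalDegree) :
    ∃ i, homogeneousComponent (q.totalDegree - 1) (pderiv i q) ≠ 0 := by
  obtain ⟨e, he, hdeg⟩ := Finset.exists_mem_eq_sup q.support
    (support_nonempty.mpr (by rintro rfl; simp at hq)) fun s => s.degree
  change q.totalDegree = e.degree at hdeg
  obtain ⟨i, hi⟩ : ∃ i, e i ≠ 0 := by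
    by_contra! h
    simp [Finsupp.degree_apply, h] at hdeg
    omega
  have hsplit : e - Finsupp.single i 1 + Finsupp.single i 1 = e :=
    tsub_add_cancel_of_le (Finsupp.single_le_iff.mpr (Nat.one_le_iff_ne_zero.mpr hi))
  have hdeg' : (e - Finsupp.single i 1).degree = q.totalDegree - 1 := by
    have := congr_arg Finsupp.degree hsplit
    rw [map_add, Finsupp.degree_single] at this
    omega
  refine ⟨i, fun h => ?_⟩
  have hcoeff := congr_arg (coeff (e - Finsupp.single i 1)) h
  rw [coeff_homogeneousComponent, if_pos hdeg', coeff_pderiv, hsplit, coeff_zero] at hcoeff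
  exact mul_ne_zero (mem_support_iff.mp he) (Nat.cast_add_one_ne_zero _) hcoeff

end PartialDerivative

section RayRestriction

variable {σ R : Type*} [CommRing R]

noncomputable def rayPoly (w : σ → R) : MvPolynomial σ R →ₐ[R] Polynomial R :=
  aeval fun i => Polynomial.C (w i) * Polynomial.X

theorem rayPoly_monomial (w : σ → R) (d : σ →₀ ℕ) (c : R) :
    rayPoly w (monomial d c) = Polynomial.C (eval w (monomial d c)) * Polynomial.X ^ d.degree := by
  simp only [rayPoly, aeval_monomial, eval_monomial, mul_pow, Finsupp.prod_mul, map_mul,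
    map_finsuppProd, Polynomial.C_pow]
  rw [Finsupp.degree_apply, Finsupp.prod, Finsupp.prod, Finset.prod_pow_eq_pow_sum]
  simp [mul_assoc]

theorem coeff_rayPoly (w : σ → R) (q : MvPolynomial σ R) (n : ℕ) :
    (rayPoly w q).coeff n = eval w (homogeneousComponent n q) := by
  induction q using MvPolynomial.induction_on' with
  | monomial d c =>
    rw [rayPoly_monomial, Polynomial.coeff_C_mul_X_pow,
      homogeneousComponent_of_mem (isHomogeneous_monomial c rfl)]
    split_ifs <;> simp
  | add p q hp hq => simp [hp, hq]

theorem natDegree_rayPoly_le (w : σ → R) (q : MvPolynomial σ R) :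
    (rayPoly w q).natDegree ≤ q.totalDegree :=
  Polynomial.natDegree_le_iff_coeff_eq_zero.mpr fun n hn => by
    rw [coeff_rayPoly, homogeneousComponent_eq_zero _ _ (by exact_mod_cast hn), map_zero]

theorem eval_rayPoly (w : σ → R) (q : MvPolynomial σ R) (t : R) :
    (rayPoly w q).eval t = eval (t • w) q := by
  induction q using MvPolynomial.induction_on with
  | C a => simp [rayPoly]
  | add p q hp hq => simp [hp, hq]
  | mul_X p i hp =>
    rw [map_mul, Polynomial.eval_mul, hp]
    simp only [rayPoly, aeval_X, Polynomial.eval_mul, Polynomial.eval_C, Polynomial.eval_X,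
      map_mul, eval_X, Pi.smul_apply, smul_eq_mul]
    ring

end RayRestriction

section Curvature

open Polynomial

variable {R : Type*}

/-- `W⁶ (κ₁ - κ₂)²` for a graph with gradient `(a, b)`, Hessian `!![L, M; M, N]` and
`W² = 1 + a² + b²`. -/
def curvatureDiscr [CommRing R] (a b L M N : R) : R :=
  ((1 + b ^ 2) * L - 2 * a * b * M + (1 + a ^ 2) * N) ^ 2
    - 4 * (1 + a ^ 2 + b ^ 2) * (L * N - M ^ 2)

theorem curvatureDiscr_nonneg [CommRing R] [LinearOrder R] [IsStrictOrderedRing R]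
    (a b L M N : R) : 0 ≤ curvatureDiscr a b L M N := by
  have sos : (1 + a ^ 2) ^ 2 * curvatureDiscr a b L M N
      = (2 * (1 + a ^ 2 + b ^ 2) * L
          - (1 + a ^ 2) * ((1 + b ^ 2) * L - 2 * a * b * M + (1 + a ^ 2) * N)) ^ 2
        + 4 * (1 + a ^ 2 + b ^ 2) * ((1 + a ^ 2) * M - a * b * L) ^ 2 := by
    rw [curvatureDiscr]; ring
  refine nonneg_of_mul_nonneg_right (a := (1 + a ^ 2) ^ 2) ?_ (by positivity)
  rw [sos]
  positivity

theorem natDegree_curvatureDiscr_le [CommRing R] {A B L M N : R[X]} {k : ℕ}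
    (hA : A.natDegree ≤ k + 1) (hB : B.natDegree ≤ k + 1)
    (hL : L.natDegree ≤ k) (hM : M.natDegree ≤ k) (hN : N.natDegree ≤ k) :
    (curvatureDiscr A B L M N).natDegree ≤ 6 * k + 4 := by
  unfold curvatureDiscr
  compute_degree
  omega

theorem natDegree_one_add_sq_add_sq [CommRing R] [LinearOrder R] [IsStrictOrderedRing R]
    {A B : R[X]} {j : ℕ} (hj : j ≠ 0) (hA : A.natDegree ≤ j) (hB : B.natDegree ≤ j)
    (hlead : A.coeff j ≠ 0 ∨ B.coeff j ≠ 0) :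
    (1 + A ^ 2 + B ^ 2).natDegree = j + j := by
  refine le_antisymm (by compute_degree; omega) (le_natDegree_of_ne_zero ?_)
  rw [Polynomial.coeff_add, Polynomial.coeff_add, Polynomial.coeff_one, if_neg (by omega), sq, sq,
    coeff_mul_add_eq_of_natDegree_le hA hA, coeff_mul_add_eq_of_natDegree_le hB hB, zero_add]
  rcases hlead with h | h
  · exact (add_pos_of_pos_of_nonneg (mul_self_pos.2 h) (mul_self_nonneg _)).ne'
  · exact (add_pos_of_nonneg_of_pos (mul_self_nonneg _) (mul_self_pos.2 h)).ne'

theorem tendsto_curvatureDiscr_div_atTop {A B L M N : ℝ[X]} {k : ℕ}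
    (hA : A.natDegree ≤ k + 1) (hB : B.natDegree ≤ k + 1)
    (hL : L.natDegree ≤ k) (hM : M.natDegree ≤ k) (hN : N.natDegree ≤ k)
    (hlead : A.coeff (k + 1) ≠ 0 ∨ B.coeff (k + 1) ≠ 0) :
    Tendsto (fun t => curvatureDiscr (A.eval t) (B.eval t) (L.eval t) (M.eval t) (N.eval t)
      / (1 + A.eval t ^ 2 + B.eval t ^ 2) ^ 3) atTop (𝓝 0) := by
  have hden := natDegree_one_add_sq_add_sq k.succ_ne_zero hA hB hlead
  have hlt : (curvatureDiscr A B L M N).degree < ((1 + A ^ 2 + B ^ 2) ^ 3).degree := by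
    refine degree_lt_degree ?_
    rw [natDegree_pow, hden]
    have := natDegree_curvatureDiscr_le hA hB hL hM hN
    omega
  simpa [curvatureDiscr] using div_tendsto_atTop_zero_of_degree_lt _ _ hlt

end Curvature

theorem ev_smul_eq_eval_rayPoly (q : MvPolynomial (Fin 2) ℝ) (w : Fin 2 → ℝ) (t : ℝ) :
    ev q (t * w 0) (t * w 1) = (rayPoly w q).eval t := by
  have hw : ![t * w 0, t * w 1] = t • w := by
    ext i
    fin_cases i <;> simp
  rw [eval_rayPoly, ev, hw]

theorem Delta2_eq_curvatureDiscr_div (p : MvPolynomial (Fin 2) ℝ) (x y : ℝ) :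
    Delta2 p x y = curvatureDiscr (ev (Dx p) x y) (ev (Dy p) x y) (ev (Dx (Dx p)) x y)
      (ev (Dy (Dx p)) x y) (ev (Dy (Dy p)) x y)
      / (1 + ev (Dx p) x y ^ 2 + ev (Dy p) x y ^ 2) ^ 3 :=
  rfl

theorem Delta2_nonneg (p : MvPolynomial (Fin 2) ℝ) (x y : ℝ) : 0 ≤ Delta2 p x y := by
  rw [Delta2_eq_curvatureDiscr_div]
  exact div_nonneg (curvatureDiscr_nonneg _ _ _ _ _) (by positivity)

theorem Delta2_eq_zero_of_totalDegree_le_one {p : MvPolynomial (Fin 2) ℝ}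
    (hp : p.totalDegree ≤ 1) (x y : ℝ) : Delta2 p x y = 0 := by
  simp [Delta2_eq_curvatureDiscr_div, Dx, Dy, pderiv_pderiv_eq_zero hp, ev, curvatureDiscr]

theorem exists_tendsto_Delta2_ray (p : MvPolynomial (Fin 2) ℝ) :
    ∃ w : Fin 2 → ℝ, Tendsto (fun t => Delta2 p (t * w 0) (t * w 1)) atTop (𝓝 0) := by
  rcases le_or_gt p.totalDegree 1 with hp | hp
  · refine ⟨0, ?_⟩
    simp only [Delta2_eq_zero_of_totalDegree_le_one hp]
    exact tendsto_const_nhds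
  obtain ⟨k, hk⟩ : ∃ k, p.totalDegree = k + 2 := ⟨p.totalDegree - 2, by omega⟩
  obtain ⟨i, hi⟩ := exists_homogeneousComponent_pderiv_ne_zero (q := p) (by omega)
  rw [hk, show k + 2 - 1 = k + 1 from rfl] at hi
  obtain ⟨w, hw⟩ : ∃ w, eval w (homogeneousComponent (k + 1) (pderiv i p)) ≠ 0 := by
    by_contra! h
    exact hi (MvPolynomial.funext fun x => by simpa using h x)
  have hlead :
      (rayPoly w (Dx p)).coeff (k + 1) ≠ 0 ∨ (rayPoly w (Dy p)).coeff (k + 1) ≠ 0 := by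
    rw [coeff_rayPoly, coeff_rayPoly, Dx, Dy]
    fin_cases i
    exacts [Or.inl hw, Or.inr hw]
  have hgrad : ∀ j, (rayPoly w (pderiv j p)).natDegree ≤ k + 1 := fun j =>
    (natDegree_rayPoly_le _ _).trans <| by
      have := totalDegree_pderiv_le j p
      omega
  have hhess : ∀ j j', (rayPoly w (pderiv j' (pderiv j p))).natDegree ≤ k := fun j j' =>
    (natDegree_rayPoly_le _ _).trans <| by
      have := totalDegree_pderiv_le j p
      have := totalDegree_pderiv_le j' (pderiv j p)
      omega
  refine ⟨w, ?_⟩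
  simp only [Delta2_eq_curvatureDiscr_div, ev_smul_eq_eval_rayPoly]
  exact tendsto_curvatureDiscr_div_atTop (hgrad 0) (hgrad 1)
    (hhess 0 0) (hhess 0 1) (hhess 1 1) hlead

/-- Toponogov's condition `inf |κ₁ − κ₂| = 0` holds for every polynomial graph. -/
theorem inf_curvature_diff_eq_zero (p : MvPolynomial (Fin 2) ℝ) :
    ⨅ q : ℝ × ℝ, Delta2 p q.1 q.2 = 0 := by
  obtain ⟨w, hw⟩ := exists_tendsto_Delta2_ray p
  refine ciInf_eq_of_forall_ge_of_forall_gt_exists_lt (fun q => Delta2_nonneg p q.1 q.2)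
    fun ε hε => ?_
  obtain ⟨t, ht⟩ := (hw.eventually (gt_mem_nhds hε)).exists
  exact ⟨(t * w 0, t * w 1), ht⟩
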